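/- Let X be a Banach space, T > 0, ℓ ∈ L¹(0,T), γ ∈ (0,1), and u ∈ C([0,T];X) with ‖u(t)‖ ≤ ρ* for all t ∈ [0,T] and t^γ h^{−γ} ‖u(t+h) − u(t)‖ ≤ ρ for all h > 0, t ∈ (0,T−h]. Assume ℓ₁* := sup over h>0, t∈(0,T−h] of (t/h)^γ ∫_t^{t+h} |ℓ(τ)|dτ and ℓ₂* := sup over t∈(0,T] of t^γ ∫₀ᵗ |ℓ(τ)|(t−τ)^{−γ}dτ are finite. Then the convolution ℋu(t) = ∫₀ᵗ ℓ(t−τ)u(τ)dτ satisfies ‖ℋu(t+h) − ℋu(t)‖ ≤ t^{−γ} h^γ (ρ* ℓ₁* + ρ ℓ₂*) for all h > 0 and t ∈ (0,T−h]. -/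
import Mathlib

open MeasureTheory Set Filter Topology

noncomputable section

private lemma aux_ii_smul {X : Type*} [NormedAddCommGroup X] [NormedSpace ℝ X]
    (ℓ : ℝ → ℝ) (g : ℝ → X) (a b : ℝ) (hab : a ≤ b)
    (hℓ : IntervalIntegrable ℓ volume a b) (hg : ContinuousOn g (Icc a b)) :
    IntervalIntegrable (fun s => ℓ s • g s) volume a b := by
  rw [intervalIntegrable_iff_integrableOn_Icc_of_le hab] at hℓ ⊢
  exact hℓ.smul_continuousOn hg isCompact_Icc

/-- increment estimate for the history operator
`ℋu(t) = ∫₀ᵗ ℓ(t−τ)u(τ)dτ` applied to a bounded, weighted-Hölder function `u`. -/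
theorem history_operator_holder_estimate
    {X : Type*} [NormedAddCommGroup X] [NormedSpace ℝ X] [CompleteSpace X]
    (T : ℝ) (hT : 0 < T)
    (ℓ : ℝ → ℝ) (hℓ : IntervalIntegrable ℓ volume 0 T)
    (γ : ℝ) (hγ : γ ∈ Set.Ioo (0:ℝ) 1)
    (ρstar ρ : ℝ)
    (u : ℝ → X) (hu : ContinuousOn u (Set.Icc 0 T))
    (hub : ∀ t ∈ Set.Icc (0:ℝ) T, ‖u t‖ ≤ ρstar)
    (huh : ∀ h : ℝ, 0 < h → ∀ t : ℝ, 0 < t → t + h ≤ T →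
      t ^ γ * h ^ (-γ) * ‖u (t + h) - u t‖ ≤ ρ)
    (ℓ₁ ℓ₂ : ℝ)
    (hℓ₁ : ∀ h : ℝ, 0 < h → ∀ t : ℝ, 0 < t → t + h ≤ T →
      (t / h) ^ γ * ∫ τ in t..(t + h), |ℓ τ| ≤ ℓ₁)
    (hℓ₂ : ∀ t : ℝ, 0 < t → t ≤ T →
      t ^ γ * ∫ τ in (0:ℝ)..t, |ℓ τ| * (t - τ) ^ (-γ) ≤ ℓ₂) :
    ∀ h : ℝ, 0 < h → ∀ t : ℝ, 0 < t → t + h ≤ T →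
      ‖(∫ τ in (0:ℝ)..(t + h), ℓ (t + h - τ) • u τ) -
          ∫ τ in (0:ℝ)..t, ℓ (t - τ) • u τ‖
        ≤ t ^ (-γ) * h ^ γ * (ρstar * ℓ₁ + ρ * ℓ₂) := by
  obtain ⟨hγ0, hγ1⟩ := hγ
  intro h hh t ht hth
  have htT : t < T := by linarith
  have ht0T : (0:ℝ) ≤ T := hT.le
  have htγ : (0:ℝ) < t ^ γ := Real.rpow_pos_of_pos ht γ
  have hhγ : (0:ℝ) < h ^ γ := Real.rpow_pos_of_pos hh γ
  have hρstar : 0 ≤ ρstar := le_trans (norm_nonneg _) (hub 0 ⟨le_rfl, ht0T⟩)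
  have hρ : 0 ≤ ρ := by
    have := huh (T/2) (by linarith) (T/2) (by linarith) (by linarith)
    have h1 : (0:ℝ) ≤ (T/2) ^ γ * (T/2) ^ (-γ) * ‖u (T/2 + T/2) - u (T/2)‖ := by positivity
    linarith
  -- interval integrability of ℓ on subintervals
  have hmono : ∀ a b : ℝ, 0 ≤ a → b ≤ T → a ≤ b → IntervalIntegrable ℓ volume a b := by
    intro a b ha hb hab
    exact hℓ.mono_set (by rw [uIcc_of_le hab, uIcc_of_le ht0T]; exact Icc_subset_Icc ha hb)
  -- continuity of shifted u
  have hucomp : ∀ c : ℝ, 0 ≤ c → c ≤ T → ContinuousOn (fun s => u (c - s)) (Icc 0 c) := by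
    intro c hc hcT
    refine hu.comp (Continuous.continuousOn (by continuity)) ?_
    intro s hs
    exact ⟨by simp only [mem_Icc] at hs ⊢; linarith [hs.2], by
      simp only [mem_Icc] at hs ⊢; linarith [hs.1]⟩
  set c : ℝ := t + h with hcdef
  have hc0 : (0:ℝ) ≤ c := by positivity
  have htc : t ≤ c := by simp only [hcdef]; linarith
  have hcT : c ≤ T := hth
  have hg1c : ContinuousOn (fun s => u (c - s)) (Icc 0 c) := hucomp c hc0 hcT
  have hg2c : ContinuousOn (fun s => u (t - s)) (Icc 0 t) := hucomp t ht.le htT.le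
  have hint_0t : IntervalIntegrable (fun s => ℓ s • u (c - s)) volume 0 t :=
    aux_ii_smul ℓ _ 0 t ht.le (hmono 0 t le_rfl htT.le ht.le)
      (hg1c.mono (Icc_subset_Icc le_rfl htc))
  have hint_tc : IntervalIntegrable (fun s => ℓ s • u (c - s)) volume t c :=
    aux_ii_smul ℓ _ t c htc (hmono t c ht.le hcT htc)
      (hg1c.mono (Icc_subset_Icc ht.le le_rfl))
  have hint2 : IntervalIntegrable (fun s => ℓ s • u (t - s)) volume 0 t :=
    aux_ii_smul ℓ _ 0 t ht.le (hmono 0 t le_rfl htT.le ht.le) hg2c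
  -- substitution
  have hsub : ∀ d : ℝ, (∫ τ in (0:ℝ)..d, ℓ (d - τ) • u τ) = ∫ s in (0:ℝ)..d, ℓ s • u (d - s) := by
    intro d
    have h1 := intervalIntegral.integral_comp_sub_left (a := (0:ℝ)) (b := d)
      (fun s => ℓ s • u (d - s)) d
    simp only [sub_self, sub_zero] at h1
    rw [← h1]
    apply intervalIntegral.integral_congr
    intro x _
    simp [sub_sub_cancel]
  have hsplit : (∫ s in (0:ℝ)..c, ℓ s • u (c - s)) =
      (∫ s in (0:ℝ)..t, ℓ s • u (c - s)) + ∫ s in t..c, ℓ s • u (c - s) :=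
    (intervalIntegral.integral_add_adjacent_intervals hint_0t hint_tc).symm
  have hBrepr : (∫ s in (0:ℝ)..t, ℓ s • u (c - s)) - (∫ s in (0:ℝ)..t, ℓ s • u (t - s)) =
      ∫ s in (0:ℝ)..t, ℓ s • (u (c - s) - u (t - s)) := by
    rw [← intervalIntegral.integral_sub hint_0t hint2]
    apply intervalIntegral.integral_congr
    intro x _
    simp [smul_sub]
  -- bound for the tail term A
  have hIℓ : IntervalIntegrable (fun s => |ℓ s|) volume t c := (hmono t c ht.le hcT htc).abs
  have hA : ‖∫ s in t..c, ℓ s • u (c - s)‖ ≤ ρstar * ℓ₁ * (h ^ γ / t ^ γ) := by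
    have h1 : ‖∫ s in t..c, ℓ s • u (c - s)‖ ≤ ∫ s in t..c, ρstar * |ℓ s| := by
      refine le_trans (intervalIntegral.norm_integral_le_integral_norm htc) ?_
      refine intervalIntegral.integral_mono_on htc hint_tc.norm (hIℓ.const_mul ρstar) ?_
      intro s hs
      rw [norm_smul, Real.norm_eq_abs]
      rw [mul_comm ρstar]
      refine mul_le_mul_of_nonneg_left ?_ (abs_nonneg _)
      refine hub (c - s) ⟨by linarith [hs.2], by linarith [hs.1, ht]⟩
    rw [intervalIntegral.integral_const_mul] at h1
    have h2 : (∫ s in t..c, |ℓ s|) ≤ ℓ₁ * (h ^ γ / t ^ γ) := by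
      have h3 := hℓ₁ h hh t ht hth
      rw [Real.div_rpow ht.le hh.le] at h3
      have hpos : (0:ℝ) < t ^ γ / h ^ γ := by positivity
      have h4 : (∫ s in t..c, |ℓ s|) * (t ^ γ / h ^ γ) ≤ ℓ₁ := by
        rw [mul_comm]; exact h3
      have h5 := (le_div_iff₀ hpos).mpr h4
      calc (∫ s in t..c, |ℓ s|) ≤ ℓ₁ / (t ^ γ / h ^ γ) := h5
        _ = ℓ₁ * (h ^ γ / t ^ γ) := by
            field_simp
    calc ‖∫ s in t..c, ℓ s • u (c - s)‖ ≤ ρstar * ∫ s in t..c, |ℓ s| := h1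
      _ ≤ ρstar * (ℓ₁ * (h ^ γ / t ^ γ)) := mul_le_mul_of_nonneg_left h2 hρstar
      _ = ρstar * ℓ₁ * (h ^ γ / t ^ γ) := by ring
  -- bound for the Hölder term B
  have hB : ‖∫ s in (0:ℝ)..t, ℓ s • (u (c - s) - u (t - s))‖ ≤ ρ * ℓ₂ * (h ^ γ / t ^ γ) := by
    set B : X := ∫ s in (0:ℝ)..t, ℓ s • (u (c - s) - u (t - s)) with hBdef
    have hfint : IntervalIntegrable (fun s => ℓ s • (u (c - s) - u (t - s))) volume 0 t :=
      aux_ii_smul ℓ _ 0 t ht.le (hmono 0 t le_rfl htT.le ht.le)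
        ((hg1c.mono (Icc_subset_Icc le_rfl htc)).sub hg2c)
    set k : ℝ → ℝ := (Ioo (0:ℝ) T).indicator fun s => s ^ (-γ) with hkdef
    set Lf : ℝ → ℝ := (Ioo (0:ℝ) T).indicator fun s => |ℓ s| with hLdef
    have hkint : Integrable k := by
      rw [hkdef, integrable_indicator_iff measurableSet_Ioo]
      have h1 : IntervalIntegrable (fun s : ℝ => s ^ (-γ)) volume 0 T :=
        intervalIntegral.intervalIntegrable_rpow' (by linarith)
      exact ((intervalIntegrable_iff_integrableOn_Ioc_of_le ht0T).mp h1).mono_set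
        Ioo_subset_Ioc_self
    have hLint : Integrable Lf := by
      rw [hLdef, integrable_indicator_iff measurableSet_Ioo]
      exact ((intervalIntegrable_iff_integrableOn_Ioc_of_le ht0T).mp hℓ.abs).mono_set
        Ioo_subset_Ioc_self
    have hae : ∀ᵐ x : ℝ, Integrable (fun s => Lf s * k (x - s)) := by
      have h2 := hLint.ae_convolution_exists (L := ContinuousLinearMap.mul ℝ ℝ) hkint
      filter_upwards [h2] with x hx
      simpa [MeasureTheory.ConvolutionExistsAt] using hx
    have hprim : Tendsto (fun x => ∫ s in (0:ℝ)..x, ℓ s • (u (c - s) - u (t - s)))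
        (𝓝[Ioo 0 t] t) (𝓝 B) := by
      have h3 : IntegrableOn (fun s => ℓ s • (u (c - s) - u (t - s))) (uIcc 0 t) := by
        rw [uIcc_of_le ht.le]
        exact (intervalIntegrable_iff_integrableOn_Icc_of_le ht.le).mp hfint
      have h4 := (intervalIntegral.continuousOn_primitive_interval h3) t
        (by rw [uIcc_of_le ht.le]; exact ⟨ht.le, le_rfl⟩)
      exact h4.mono_left (nhdsWithin_mono t (by rw [uIcc_of_le ht.le]; exact Ioo_subset_Icc_self))
    refine le_of_forall_pos_le_add ?_
    intro η hη
    have hE1 : ∀ᶠ x in 𝓝[Ioo 0 t] t,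
        ‖(∫ s in (0:ℝ)..x, ℓ s • (u (c - s) - u (t - s))) - B‖ < η/2 := by
      have h5 : Tendsto (fun x => ‖(∫ s in (0:ℝ)..x, ℓ s • (u (c - s) - u (t - s))) - B‖)
          (𝓝[Ioo 0 t] t) (𝓝 0) := by
        have h5' := (hprim.sub (tendsto_const_nhds (x := B))).norm
        simpa using h5'
      exact h5.eventually_lt_const (by linarith)
    have hE2 : ∀ᶠ x in 𝓝[Ioo 0 t] t,
        ρ * ℓ₂ * (h ^ γ / x ^ γ) < ρ * ℓ₂ * (h ^ γ / t ^ γ) + η/2 := by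
      have h6 : ContinuousAt (fun x : ℝ => ρ * ℓ₂ * (h ^ γ / x ^ γ)) t := by
        refine continuousAt_const.mul (continuousAt_const.div ?_ (ne_of_gt htγ))
        exact Real.continuousAt_rpow_const t γ (Or.inl (ne_of_gt ht))
      exact (h6.continuousWithinAt.tendsto).eventually_lt_const (by linarith)
    have hmem := hE1.and hE2
    rw [eventually_nhdsWithin_iff, Metric.eventually_nhds_iff] at hmem
    obtain ⟨ε, hε, hball⟩ := hmem
    set a : ℝ := max (t - ε) 0 with hadef
    have hat : a < t := max_lt (by linarith) ht
    have hIpos : volume (Ioo a t) ≠ 0 := by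
      rw [Real.volume_Ioo]
      simp only [ne_eq, ENNReal.ofReal_eq_zero, not_le]
      linarith
    have hpick : ∃ x ∈ Ioo a t, Integrable (fun s => Lf s * k (x - s)) := by
      by_contra hcon
      push_neg at hcon
      have h7 : Ioo a t ⊆ {x | ¬ Integrable (fun s => Lf s * k (x - s)) volume} :=
        fun x hx => hcon x hx
      exact hIpos (measure_mono_null h7 (ae_iff.mp hae))
    obtain ⟨x, hxI, hPx⟩ := hpick
    have hx0 : 0 < x := lt_of_le_of_lt (le_max_right _ _) hxI.1
    have hxt : x < t := hxI.2
    have hdist : dist x t < ε := by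
      rw [Real.dist_eq, abs_sub_lt_iff]
      have h9 : t - ε ≤ a := le_max_left _ _
      constructor <;> [linarith [hxI.1]; linarith [hxI.1]]
    obtain ⟨hc1, hc2⟩ := hball hdist ⟨hx0, hxt⟩
    -- estimate at x
    have hwcont : ContinuousOn (fun s : ℝ => (t - s) ^ (-γ)) (Icc 0 x) := by
      refine ContinuousOn.rpow_const ((continuous_const.sub continuous_id).continuousOn) ?_
      intro s hs
      exact Or.inl (ne_of_gt (show (0:ℝ) < t - s by
        have := hs.2; linarith))
    have hinner : IntervalIntegrable (fun s => |ℓ s| * (t - s) ^ (-γ)) volume 0 x :=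
      (hmono 0 x le_rfl (le_trans hxt.le htT.le) hx0.le).abs.mul_continuousOn
        (by rw [uIcc_of_le hx0.le]; exact hwcont)
    have hmaj : IntervalIntegrable (fun s => (ρ * h ^ γ) * (|ℓ s| * (t - s) ^ (-γ))) volume 0 x :=
      hinner.const_mul _
    have hfx : IntervalIntegrable (fun s => ℓ s • (u (c - s) - u (t - s))) volume 0 x :=
      hfint.mono_set
        (by rw [uIcc_of_le hx0.le, uIcc_of_le ht.le]; exact Icc_subset_Icc le_rfl hxt.le)
    have hpt : ∀ s ∈ Icc 0 x, ‖ℓ s • (u (c - s) - u (t - s))‖ ≤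
        (ρ * h ^ γ) * (|ℓ s| * (t - s) ^ (-γ)) := by
      intro s hs
      have hts : (0:ℝ) < t - s := by have := hs.2; linarith
      have hΔ : ‖u (c - s) - u (t - s)‖ ≤ ρ * h ^ γ * (t - s) ^ (-γ) := by
        have h1 := huh h hh (t - s) hts (by
          have hc' : c = t + h := hcdef
          have hs0' : 0 ≤ s := hs.1
          linarith [hth])
        have hcs : c - s = t - s + h := by rw [hcdef]; ring
        rw [hcs]
        have ha : (0:ℝ) < (t - s) ^ γ := Real.rpow_pos_of_pos hts γ
        have hb : (0:ℝ) < h ^ (-γ) := Real.rpow_pos_of_pos hh _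
        have h2 : ‖u (t - s + h) - u (t - s)‖ ≤ ρ / ((t - s) ^ γ * h ^ (-γ)) := by
          rw [le_div_iff₀ (by positivity), mul_comm]
          exact h1
        refine h2.trans (le_of_eq ?_)
        rw [Real.rpow_neg hh.le, Real.rpow_neg hts.le]
        field_simp
      calc ‖ℓ s • (u (c - s) - u (t - s))‖ = |ℓ s| * ‖u (c - s) - u (t - s)‖ := by
            rw [norm_smul, Real.norm_eq_abs]
        _ ≤ |ℓ s| * (ρ * h ^ γ * (t - s) ^ (-γ)) :=
            mul_le_mul_of_nonneg_left hΔ (abs_nonneg _)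
        _ = (ρ * h ^ γ) * (|ℓ s| * (t - s) ^ (-γ)) := by ring
    have hL2 : ‖∫ s in (0:ℝ)..x, ℓ s • (u (c - s) - u (t - s))‖ ≤
        (ρ * h ^ γ) * ∫ s in (0:ℝ)..x, |ℓ s| * (t - s) ^ (-γ) := by
      rw [← intervalIntegral.integral_const_mul]
      refine le_trans (intervalIntegral.norm_integral_le_integral_norm hx0.le) ?_
      exact intervalIntegral.integral_mono_on hx0.le hfx.norm hmaj hpt
    have hm2int : IntervalIntegrable (fun s => |ℓ s| * (x - s) ^ (-γ)) volume 0 x := by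
      rw [intervalIntegrable_iff_integrableOn_Ioc_of_le hx0.le]
      refine (hPx.integrableOn).congr_fun ?_ measurableSet_Ioc
      intro s hs
      rcases eq_or_lt_of_le hs.2 with heq | hlt
      · have hsx : x - s = 0 := by rw [heq]; ring
        simp only
        rw [hsx, hkdef, hLdef]
        rw [Set.indicator_of_notMem (by simp : (0:ℝ) ∉ Ioo (0:ℝ) T)]
        rw [Real.zero_rpow (by linarith : -γ ≠ 0)]
        simp
      · have hs0 : 0 < s := hs.1
        have hsT : s < T := by linarith
        have hxsT : x - s < T := by linarith
        simp only
        rw [hkdef, hLdef]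
        rw [Set.indicator_of_mem (mem_Ioo.mpr ⟨hs0, hsT⟩)]
        rw [Set.indicator_of_mem (mem_Ioo.mpr ⟨by linarith, hxsT⟩)]
    have hmono2 : (∫ s in (0:ℝ)..x, |ℓ s| * (t - s) ^ (-γ)) ≤
        ∫ s in (0:ℝ)..x, |ℓ s| * (x - s) ^ (-γ) := by
      refine intervalIntegral.integral_mono_ae_restrict hx0.le hinner hm2int ?_
      have hne : ∀ᵐ s ∂(volume.restrict (Icc 0 x)), s ≠ x := by
        refine ae_restrict_of_ae ?_
        rw [ae_iff]
        simp only [ne_eq, not_not, setOf_eq_eq_singleton]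
        exact measure_singleton x
      filter_upwards [ae_restrict_mem measurableSet_Icc, hne] with s hs hsne
      have hsx : s < x := lt_of_le_of_ne hs.2 hsne
      refine mul_le_mul_of_nonneg_left ?_ (abs_nonneg _)
      exact Real.rpow_le_rpow_of_nonpos (by linarith) (by linarith) (by linarith)
    have hI2 : (∫ s in (0:ℝ)..x, |ℓ s| * (x - s) ^ (-γ)) ≤ ℓ₂ / x ^ γ := by
      have h1 := hℓ₂ x hx0 (by linarith)
      have hxγ : (0:ℝ) < x ^ γ := Real.rpow_pos_of_pos hx0 γ
      rw [le_div_iff₀ hxγ, mul_comm]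
      exact h1
    have hρh : (0:ℝ) ≤ ρ * h ^ γ := mul_nonneg hρ hhγ.le
    have hnormB : ‖B‖ ≤ ‖∫ s in (0:ℝ)..x, ℓ s • (u (c - s) - u (t - s))‖ + η/2 := by
      have h10 := norm_sub_norm_le B (∫ s in (0:ℝ)..x, ℓ s • (u (c - s) - u (t - s)))
      have h11 := norm_sub_rev B (∫ s in (0:ℝ)..x, ℓ s • (u (c - s) - u (t - s)))
      linarith [hc1]
    have hfin1 : (ρ * h ^ γ) * (∫ s in (0:ℝ)..x, |ℓ s| * (t - s) ^ (-γ)) ≤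
        (ρ * h ^ γ) * (ℓ₂ / x ^ γ) :=
      mul_le_mul_of_nonneg_left (hmono2.trans hI2) hρh
    have hfin2 : (ρ * h ^ γ) * (ℓ₂ / x ^ γ) = ρ * ℓ₂ * (h ^ γ / x ^ γ) := by ring
    linarith [hnormB, hL2, hfin1, hc2]
  -- assemble
  rw [hsub (t + h), hsub t]
  rw [← hcdef, hsplit]
  have e1 : ((∫ s in (0:ℝ)..t, ℓ s • u (c - s)) + ∫ s in t..c, ℓ s • u (c - s)) -
      (∫ s in (0:ℝ)..t, ℓ s • u (t - s)) =
      (∫ s in (0:ℝ)..t, ℓ s • (u (c - s) - u (t - s))) + ∫ s in t..c, ℓ s • u (c - s) := by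
    rw [← hBrepr]; abel
  rw [e1]
  refine (norm_add_le _ _).trans ?_
  have e2 : t ^ (-γ) * h ^ γ * (ρstar * ℓ₁ + ρ * ℓ₂) =
      ρ * ℓ₂ * (h ^ γ / t ^ γ) + ρstar * ℓ₁ * (h ^ γ / t ^ γ) := by
    rw [Real.rpow_neg ht.le]
    field_simp
    ring
  rw [e2]
  linarith [hA, hB]
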